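/- arXiv:1510.09124 — 2 statements merged into one kernel-verified Lean document; each statement's English description precedes it below -/
import Mathlib

section
/- (Correctness of the Kronecker-based cancellation vector.) Let K ≥ 1 and n_1,...,n_K be integers with n_j ≥ 2, set N = n_1·n_2···n_K, let Θ_1, ..., Θ_K ∈ ℝ, and choose integers ℓ_1, ..., ℓ_K with 1 ≤ ℓ_j ≤ n_j − 1. Define the cancellation vector s ∈ ℂ^N by s_{ι(c)} = Π_{j=1}^{K} exp(−2πi·ℓ_j·c_j / n_j) · exp(−i·m_j·c_j·Θ_j) for every digit tuple c. Then s simultaneously zero-forces all K steering vectors: for every k = 1, ..., K, Σ_{r=0}^{N−1} s_r · exp(i·r·Θ_k) = 0, i.e., sᵀ · v(Θ_k) = 0. -/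
/-!
The summand factors over the digits, because the steering vector of a mixed-radix index is the
Kronecker product of the steering vectors `v(m_j Θ)` of the digits. Hence the sum is a product over
`j` of one-digit sums. In the `k`-th factor the phase `exp(-i m_k c Θ_k)` cancels the steering
vector exactly, leaving the sum of the powers of the `n_k`-th root of unity `exp(-2πi ℓ_k / n_k)`,
which is not `1` because `0 < ℓ_k < n_k`; so that factor vanishes.
-/

open Complex Finset
open scoped Real

lemma sum_exp_neg_two_pi_I_mul_div_eq_zero {n ℓ : ℕ} (hℓ : ¬ n ∣ ℓ) :
    ∑ c : Fin n, exp (-2 * π * I * ℓ * c / n) = 0 := by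
  rcases eq_or_ne n 0 with rfl | hn
  · simp
  set ζ := (exp (2 * π * I / n))⁻¹ ^ ℓ
  have hζ : IsPrimitiveRoot (exp (2 * π * I / n))⁻¹ n := (isPrimitiveRoot_exp n hn).inv
  have hζn : ζ ^ n = 1 := by rw [pow_right_comm, hζ.pow_eq_one, one_pow]
  have hζ1 : ζ ≠ 1 := mt (hζ.pow_eq_one_iff_dvd ℓ).mp hℓ
  have hterm (c : ℕ) : exp (-2 * π * I * ℓ * c / n) = ζ ^ c := by
    simp only [ζ, ← exp_neg, ← exp_nat_mul]
    ring_nf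
  calc ∑ c : Fin n, exp (-2 * π * I * ℓ * c / n) = ∑ c ∈ range n, ζ ^ c := by
        simp only [hterm, Fin.sum_univ_eq_sum_range (ζ ^ ·)]
    _ = 0 := by
        rw [← mul_eq_zero_iff_right (sub_ne_zero.2 hζ1), geom_sum_mul, hζn, sub_self]

theorem kronecker_cancellation_vector_zero_forces_general (K : ℕ)
    (n : Fin K → ℕ) (Θ : Fin K → ℝ)
    (ℓ : Fin K → ℕ) (hℓ1 : ∀ j, 1 ≤ ℓ j) (hℓ2 : ∀ j, ℓ j ≤ n j - 1) (k : Fin K) :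
    ∑ c : (∀ j : Fin K, Fin (n j)),
      (∏ j, Complex.exp (-2 * Real.pi * Complex.I * (ℓ j : ℂ) * ((c j).val : ℂ) / (n j : ℂ)) *
        Complex.exp (-((∏ j' ∈ Finset.Iio j, n j' : ℕ) : ℂ) * ((c j).val : ℂ) *
          (Θ j : ℂ) * Complex.I)) *
      Complex.exp (((∑ j, (∏ j' ∈ Finset.Iio j, n j') * (c j).val : ℕ) : ℂ) *
        (Θ k : ℂ) * Complex.I) = 0 := by
  set m : Fin K → ℕ := fun j => ∏ j' ∈ Iio j, n j'
  set G : ∀ j, Fin (n j) → ℂ := fun j c =>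
    exp (-2 * π * I * ℓ j * c / n j) * exp (-(m j : ℂ) * c * Θ j * I) * exp (m j * c * Θ k * I)
  have hsplit (c : ∀ j, Fin (n j)) :
      (∏ j, exp (-2 * π * I * ℓ j * (c j : ℕ) / n j) *
          exp (-(m j : ℂ) * (c j : ℕ) * Θ j * I)) *
        exp (((∑ j, m j * (c j : ℕ) : ℕ) : ℂ) * Θ k * I) = ∏ j, G j (c j) := by
    simp only [G, prod_mul_distrib, ← exp_sum, Nat.cast_sum, Nat.cast_mul, sum_mul]
  have hcancel (c : Fin (n k)) : G k c = exp (-2 * π * I * ℓ k * c / n k) := by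
    have hphase : -(m k : ℂ) * c * Θ k * I + m k * c * Θ k * I = 0 := by ring
    simp only [G]
    rw [mul_assoc, ← exp_add, hphase, exp_zero, mul_one]
  rw [sum_congr rfl fun c _ => hsplit c, ← Fintype.prod_sum]
  refine prod_eq_zero (mem_univ k) ?_
  rw [sum_congr rfl fun c _ => hcancel c]
  have hℓn : ℓ k < n k := by have := hℓ1 k; have := hℓ2 k; omega
  exact sum_exp_neg_two_pi_I_mul_div_eq_zero (Nat.not_dvd_of_pos_of_lt (hℓ1 k) hℓn)

/-- Correctness of the Kronecker-based cancellation vector. The vector `s`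
with entries `s_{ι(c)} = Π_j exp(-2πi ℓ_j c_j / n_j) · exp(-i m_j c_j Θ_j)` zero-forces
every steering vector `v(Θ_k)`: summing over all digit tuples `c` (equivalently over all
indices `r = ι(c) ∈ {0,...,N-1}`), `Σ_c s_{ι(c)} · exp(i ι(c) Θ_k) = 0`. -/
theorem kronecker_cancellation_vector_zero_forces (K : ℕ) (hK : 1 ≤ K)
    (n : Fin K → ℕ) (hn : ∀ j, 2 ≤ n j) (Θ : Fin K → ℝ)
    (ℓ : Fin K → ℕ) (hℓ1 : ∀ j, 1 ≤ ℓ j) (hℓ2 : ∀ j, ℓ j ≤ n j - 1) (k : Fin K) :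
    ∑ c : (∀ j : Fin K, Fin (n j)),
      (∏ j, Complex.exp (-2 * Real.pi * Complex.I * (ℓ j : ℂ) * ((c j).val : ℂ) / (n j : ℂ)) *
        Complex.exp (-((∏ j' ∈ Finset.Iio j, n j' : ℕ) : ℂ) * ((c j).val : ℂ) *
          (Θ j : ℂ) * Complex.I)) *
      Complex.exp (((∑ j, (∏ j' ∈ Finset.Iio j, n j') * (c j).val : ℕ) : ℂ) *
        (Θ k : ℂ) * Complex.I) = 0 :=
  kronecker_cancellation_vector_zero_forces_general K n Θ ℓ hℓ1 hℓ2 k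
end

section
/- For every integer n ≥ 1 and integers P_1, P_2, ..., P_n satisfying 2 ≤ P_1 ≤ P_2 ≤ ... ≤ P_n, the inequality P_1·P_2···P_n − n ≤ (P_1 − 1)·(P_2 − 1)···(P_n − 1)·n! holds. -/
/-- For integers `2 ≤ P_1 ≤ ⋯ ≤ P_n`,
`P_1 ⋯ P_n − n ≤ (P_1 − 1) ⋯ (P_n − 1) · n!`. -/
theorem prod_sub_le_prod_sub_one_mul_factorial (n : ℕ) (hn : 1 ≤ n)
    (P : Fin n → ℤ) (hP : ∀ i, 2 ≤ P i) (hmono : Monotone P) :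
    (∏ i, P i) - (n : ℤ) ≤ (∏ i, (P i - 1)) * (n.factorial : ℤ) := by
  induction n, hn using Nat.le_induction with
  | base =>
    simp only [Fin.prod_univ_one, Nat.factorial_one, Nat.cast_one, mul_one]
    exact le_rfl
  | succ n hn ih =>
    set Q : Fin n → ℤ := fun i => P i.castSucc with hQ
    have hQ2 : ∀ i, 2 ≤ Q i := fun i => hP _
    have hQmono : Monotone Q := fun i j hij => hmono (by simpa using hij)
    have hA : (∏ i, Q i) - (n : ℤ) ≤ (∏ i, (Q i - 1)) * (n.factorial : ℤ) :=
      ih Q hQ2 hQmono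
    set A := ∏ i, Q i with hAdef
    set B := ∏ i, (Q i - 1) with hBdef
    set p := P (Fin.last n) with hpdef
    have hB1 : (1 : ℤ) ≤ B := by
      have hBpos : 0 < B := by
        rw [hBdef]
        exact Finset.prod_pos (fun i _ => by linarith [hQ2 i])
      omega
    have hF1 : (1 : ℤ) ≤ (n.factorial : ℤ) := by exact_mod_cast Nat.one_le_iff_ne_zero.mpr n.factorial_ne_zero
    have hp2 : (2 : ℤ) ≤ p := hP _
    rw [Fin.prod_univ_castSucc P, Fin.prod_univ_castSucc (fun i => P i - 1)]
    have hfact : ((n + 1).factorial : ℤ) = (n + 1) * (n.factorial : ℤ) := by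
      rw [Nat.factorial_succ]; push_cast; ring
    rw [hfact]
    have hn1 : (1 : ℤ) ≤ (n : ℤ) := by exact_mod_cast hn
    have h1 : p * A ≤ p * ((B * (n.factorial : ℤ)) + n) := by
      have := mul_le_mul_of_nonneg_left (by linarith : A ≤ B * (n.factorial : ℤ) + n)
        (by linarith : (0 : ℤ) ≤ p)
      linarith
    have h2 : (0 : ℤ) ≤ (B * (n.factorial : ℤ) - 1) * (n * p - n - 1) := by
      apply mul_nonneg
      · nlinarith
      · nlinarith
    push_cast
    nlinarith [h1, h2]
end
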